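/- Let g have signature (+,−,…,−) on ℝ^{n+1} (n ≥ 2), let Π be a codimension-2 spacelike subspace, and let H be a timelike hyperplane containing Π (i.e. H contains some u with g(u,u) > 0). Let v and w be the two non-proportional future-directed lightlike vectors orthogonal to Π. Then v and w lie strictly on opposite sides of H: for any linear functional φ with kernel H, φ(v) and φ(w) are nonzero with opposite signs. -/

import Mathlib

/-- The standard Minkowski bilinear form of signature `(+,−,…,−)` on `ℝ^{n+1}`. -/
def mform {n : ℕ} (v w : Fin (n + 1) → ℝ) : ℝ :=
  v 0 * w 0 - ∑ i : Fin n, v i.succ * w i.succ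

/-!
Since `P` is negative definite, the space splits as `P ⊕ Q` with `Q = P^⊥` a plane, and `Q` is
spanned by the null vectors `v, w`. Splitting a timelike `u ∈ H` along `P ⊕ Q` gives a timelike
`q = a v + b w ∈ H`; then `0 < g(q, q) = 2ab g(v, w)` with `g(v, w) > 0` (two future null vectors),
so `ab > 0`. Since `φ q = 0` we get `a φ(v) + b φ(w) = 0`, which forces opposite signs as soon as
`φ` does not vanish on both `v` and `w`, and it cannot, for then it would vanish on `P ⊕ Q`.
-/

open Module Submodule LinearMap.BilinForm

lemma mul_neg_of_mul_add_mul_eq_zero {a b x y : ℝ} (hab : 0 < a * b) (h : a * x + b * y = 0)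
    (hxy : x ≠ 0 ∨ y ≠ 0) : x * y < 0 := by
  have hby : b * y ≠ 0 := by
    intro hby
    have hax : a * x = 0 := by linarith
    rcases hxy with hx | hy
    · exact hx ((mul_eq_zero.mp hax).resolve_left (left_ne_zero_of_mul hab.ne'))
    · exact hy ((mul_eq_zero.mp hby).resolve_left (right_ne_zero_of_mul hab.ne'))
  have : a * b * (x * y) = -(b * y) ^ 2 := by linear_combination (b * y) * h
  nlinarith [sq_pos_of_ne_zero hby]

section LinearAlgebra

variable {K V : Type*} [Field K] [AddCommGroup V] [Module K V]

lemma span_pair_eq_of_finrank_le_two {Q : Submodule K V} [FiniteDimensional K Q] {v w : V}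
    (hv : v ∈ Q) (hw : w ∈ Q) (hvw : LinearIndependent K ![v, w]) (hQ : finrank K Q ≤ 2) :
    span K {v, w} = Q := by
  refine eq_of_le_of_finrank_le (span_le.mpr (Set.insert_subset hv (by simpa using hw))) ?_
  rwa [← Matrix.range_cons_cons_empty v w ![], finrank_span_eq_card hvw, Fintype.card_fin]

lemma apply_ne_zero_or_apply_ne_zero {φ : V →ₗ[K] K} {P : Submodule K V} {v w : V}
    (hspan : P ⊔ span K {v, w} = ⊤) (hP : P ≤ LinearMap.ker φ) (hφ : LinearMap.ker φ ≠ ⊤) :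
    φ v ≠ 0 ∨ φ w ≠ 0 := by
  by_contra! h
  refine hφ (eq_top_iff.mpr (hspan ▸ sup_le hP (span_le.mpr ?_)))
  rintro x (rfl | rfl)
  exacts [h.1, h.2]

end LinearAlgebra

section BilinForm

variable {V : Type*} [AddCommGroup V] [Module ℝ V] {B : LinearMap.BilinForm ℝ V}

lemma apply_smul_add_smul_self_of_null (hB : B.IsSymm) {v w : V} (hv : B v v = 0)
    (hw : B w w = 0) (a b : ℝ) : B (a • v + b • w) (a • v + b • w) = 2 * a * b * B v w := by
  simp only [map_add, map_smul, LinearMap.add_apply, LinearMap.smul_apply, smul_eq_mul, hv, hw,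
    hB.eq w v]
  ring

/-- `hT` is how a Lorentzian form says that `T` is timelike: `T^⊥` is negative definite. -/
lemma apply_pos_of_null_of_future (hB : B.IsSymm) {T v w : V}
    (hT : ∀ x, B T x = 0 → x ≠ 0 → B x x < 0) (hv : B v v = 0) (hw : B w w = 0)
    (hTv : 0 < B T v) (hTw : 0 < B T w) (hvw : ¬ ∃ c : ℝ, w = c • v) : 0 < B v w := by
  set u := B T w • v + (-B T v) • w
  have hTu : B T u = 0 := by
    simp only [u, map_add, map_smul, smul_eq_mul]
    ring
  have hu : u ≠ 0 := by
    intro h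
    refine hvw ⟨(B T v)⁻¹ * B T w, ?_⟩
    rw [← smul_smul, eq_inv_smul_iff₀ hTv.ne']
    linear_combination (norm := module) -h
  have huu := hT u hTu hu
  rw [apply_smul_add_smul_self_of_null hB hv hw] at huu
  nlinarith [mul_pos hTw hTv]

variable [FiniteDimensional ℝ V] {P : Submodule ℝ V}

lemma isCompl_orthogonal_of_neg_definite (hB : B.IsRefl) (hP : ∀ z ∈ P, z ≠ 0 → B z z < 0) :
    IsCompl P (B.orthogonal P) := by
  refine (isCompl_orthogonal_iff_disjoint hB).mpr (disjoint_def.mpr fun z hzP hzQ => ?_)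
  by_contra hz
  exact (hP z hzP hz).ne (hzQ z hzP)

lemma exists_mem_orthogonal_pos_of_neg_definite (hB : B.IsRefl)
    (hP : ∀ z ∈ P, z ≠ 0 → B z z < 0) {H : Submodule ℝ V} (hPH : P ≤ H) {u : V} (hu : u ∈ H)
    (huu : 0 < B u u) : ∃ q ∈ H, q ∈ B.orthogonal P ∧ 0 < B q q := by
  obtain ⟨p, q, hp, hq, rfl⟩ :=
    codisjoint_iff_exists_add_eq.mp (isCompl_orthogonal_of_neg_definite hB hP).codisjoint u
  refine ⟨q, by simpa using H.sub_mem hu (hPH hp), hq, ?_⟩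
  have hpp : B p p ≤ 0 := by
    rcases eq_or_ne p 0 with rfl | hp0
    · simp
    · exact (hP p hp hp0).le
  have hpq : B p q = 0 := hq p hp
  have hqp : B q p = 0 := hB p q hpq
  simp only [map_add, LinearMap.add_apply, hpq, hqp] at huu
  linarith

end BilinForm

section Minkowski

variable {n : ℕ}

def minkowski (n : ℕ) : LinearMap.BilinForm ℝ (Fin (n + 1) → ℝ) :=
  LinearMap.mk₂ ℝ mform
    (fun x y z => by simp only [mform, Pi.add_apply, add_mul, Finset.sum_add_distrib]; ring)
    (fun c x z => by
      simp only [mform, Pi.smul_apply, smul_eq_mul, mul_assoc, ← Finset.mul_sum]; ring)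
    (fun x y z => by simp only [mform, Pi.add_apply, mul_add, Finset.sum_add_distrib]; ring)
    (fun c x z => by
      simp only [mform, Pi.smul_apply, smul_eq_mul, mul_left_comm _ c, ← Finset.mul_sum]; ring)

@[simp] lemma minkowski_apply (x y : Fin (n + 1) → ℝ) : minkowski n x y = mform x y := rfl

lemma minkowski_isSymm (n : ℕ) : (minkowski n).IsSymm :=
  ⟨fun x y => by simp only [minkowski_apply, mform, mul_comm]⟩

lemma mform_self_neg_of_mform_eq_zero {T x : Fin (n + 1) → ℝ} (hT : 0 < mform T T)
    (hTx : mform T x = 0) (hx : x ≠ 0) : mform x x < 0 := by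
  have hCS := Finset.sum_mul_sq_le_sq_mul_sq Finset.univ (fun i : Fin n => T i.succ)
    (fun i => x i.succ)
  simp only [mform, ← pow_two] at hT hTx hCS ⊢
  set s := ∑ i : Fin n, T i.succ ^ 2
  set t := ∑ i : Fin n, x i.succ ^ 2
  have hs : 0 ≤ s := by positivity
  by_contra! hxx
  have hx0 : x 0 = 0 := by
    have hc : (T 0 * x 0) ^ 2 ≤ s * x 0 ^ 2 := by
      rw [eq_of_sub_eq_zero hTx]
      exact hCS.trans (mul_le_mul_of_nonneg_left (by linarith) hs)
    have : (T 0 ^ 2 - s) * x 0 ^ 2 ≤ 0 := by linarith [mul_pow (T 0) (x 0) 2]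
    exact pow_eq_zero_iff two_ne_zero |>.mp (by nlinarith [sq_nonneg (x 0)])
  have htail := (Finset.sum_eq_zero_iff_of_nonneg fun i _ => sq_nonneg (x (Fin.succ i))).mp
    (by rw [hx0] at hxx; linarith [show 0 ≤ t by positivity] : t = 0)
  exact hx (funext fun i => Fin.cases hx0 (fun j => pow_eq_zero_iff two_ne_zero |>.mp
    (htail j (Finset.mem_univ j))) i)

end Minkowski

theorem stmt8_general {n : ℕ}
    (P H : Submodule ℝ (Fin (n + 1) → ℝ))
    (hPdim : Module.finrank ℝ P = n - 1)
    (hPspace : ∀ z ∈ P, z ≠ 0 → mform z z < 0)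
    (hHdim : Module.finrank ℝ H = n)
    (hPH : P ≤ H)
    (hHtime : ∃ u ∈ H, 0 < mform u u)
    (T : Fin (n + 1) → ℝ) (hT : 0 < mform T T)
    (v w : Fin (n + 1) → ℝ)
    (hvnull : mform v v = 0) (hwnull : mform w w = 0)
    (hvfut : 0 < mform T v) (hwfut : 0 < mform T w)
    (hvorth : ∀ z ∈ P, mform v z = 0) (hworth : ∀ z ∈ P, mform w z = 0)
    (hnprop : ¬ ∃ c : ℝ, w = c • v)
    (φ : (Fin (n + 1) → ℝ) →ₗ[ℝ] ℝ) (hφ : LinearMap.ker φ = H) :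
    φ v ≠ 0 ∧ φ w ≠ 0 ∧ φ v * φ w < 0 := by
  have hB := minkowski_isSymm n
  have hPQ := isCompl_orthogonal_of_neg_definite hB.isRefl hPspace
  have hv0 : v ≠ 0 := by rintro rfl; simp [mform] at hvfut
  have hspan : span ℝ {v, w} = (minkowski n).orthogonal P := by
    refine span_pair_eq_of_finrank_le_two (fun z hz => (hB.eq z v).trans (hvorth z hz))
      (fun z hz => (hB.eq z w).trans (hworth z hz))
      ((LinearIndependent.pair_iff' hv0).mpr fun a ha => hnprop ⟨a, ha.symm⟩) ?_
    have := finrank_add_eq_of_isCompl hPQ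
    rw [hPdim, finrank_fin_fun] at this
    omega
  obtain ⟨u, huH, huu⟩ := hHtime
  obtain ⟨q, hqH, hqQ, hqq⟩ :=
    exists_mem_orthogonal_pos_of_neg_definite hB.isRefl hPspace hPH huH huu
  obtain ⟨a, b, rfl⟩ := mem_span_pair.mp (hspan ▸ hqQ)
  have hvw : 0 < mform v w := apply_pos_of_null_of_future hB
    (fun _ => mform_self_neg_of_mform_eq_zero hT) hvnull hwnull hvfut hwfut hnprop
  have hab : 0 < a * b := by
    rw [apply_smul_add_smul_self_of_null hB hvnull hwnull] at hqq
    exact pos_of_mul_pos_left (by simpa [mul_assoc] using hqq) hvw.le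
  rw [← hφ, LinearMap.mem_ker, map_add, map_smul, map_smul, smul_eq_mul, smul_eq_mul] at hqH
  have hφvw : φ v ≠ 0 ∨ φ w ≠ 0 := by
    refine apply_ne_zero_or_apply_ne_zero (hspan ▸ hPQ.sup_eq_top) (hφ ▸ hPH) fun htop => ?_
    rw [hφ] at htop
    rw [htop, finrank_top, finrank_fin_fun] at hHdim
    omega
  have hneg := mul_neg_of_mul_add_mul_eq_zero hab hqH hφvw
  exact ⟨left_ne_zero_of_mul hneg.ne, right_ne_zero_of_mul hneg.ne, hneg⟩

/-- Let `P` be a codimension-2 spacelike subspace and `H ⊇ P` a timelike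
hyperplane. The two non-proportional future-directed lightlike vectors `v, w`
orthogonal to `P` lie strictly on opposite sides of `H`: for any linear functional
`φ` with kernel `H`, `φ(v)` and `φ(w)` are nonzero with opposite signs. -/
theorem stmt8 {n : ℕ} (hn : 2 ≤ n)
    (P H : Submodule ℝ (Fin (n + 1) → ℝ))
    (hPdim : Module.finrank ℝ P = n - 1)
    (hPspace : ∀ z ∈ P, z ≠ 0 → mform z z < 0)
    (hHdim : Module.finrank ℝ H = n)
    (hPH : P ≤ H)
    (hHtime : ∃ u ∈ H, 0 < mform u u)
    (T : Fin (n + 1) → ℝ) (hT : 0 < mform T T)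
    (v w : Fin (n + 1) → ℝ)
    (hvnull : mform v v = 0) (hwnull : mform w w = 0)
    (hvfut : 0 < mform T v) (hwfut : 0 < mform T w)
    (hvorth : ∀ z ∈ P, mform v z = 0) (hworth : ∀ z ∈ P, mform w z = 0)
    (hnprop : ¬ ∃ c : ℝ, w = c • v)
    (φ : (Fin (n + 1) → ℝ) →ₗ[ℝ] ℝ) (hφ : LinearMap.ker φ = H) :
    φ v ≠ 0 ∧ φ w ≠ 0 ∧ φ v * φ w < 0 :=
  stmt8_general P H hPdim hPspace hHdim hPH hHtime T hT v w hvnull hwnull hvfut hwfut hvorth hworth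
    hnprop φ hφ
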